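/- arXiv:2402.10150 — 2 statements merged into one kernel-verified Lean document; each statement's English description precedes it below -/
import Mathlib

section
/- Let x₁,…,x_N be unit vectors in ℝ^d and let h: ℝ → ℝ be convex and decreasing. Then (1/N²)·Σ_{i,j} h(‖xᵢ - xⱼ‖²) ≥ h(2), with the sum over all ordered pairs (i,j) including i = j. -/
open Finset

/- By Jensen, the average of `h (‖xᵢ - xⱼ‖²)` over all ordered pairs is at least `h` of the average
squared distance. Expanding the squares, that average equals `2 - 2‖(1/N) ∑ xᵢ‖² ≤ 2` for unit
vectors, and `h` is antitone. -/

lemma sum_sum_norm_sub_sq {ι E : Type*} [Fintype ι] [NormedAddCommGroup E]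
    [InnerProductSpace ℝ E] (x : ι → E) :
    ∑ i, ∑ j, ‖x i - x j‖ ^ 2
      = 2 * Fintype.card ι * ∑ i, ‖x i‖ ^ 2 - 2 * ‖∑ i, x i‖ ^ 2 := by
  have hinner : ∑ i, ∑ j, inner ℝ (x i) (x j) = ‖∑ i, x i‖ ^ 2 := by
    rw [← real_inner_self_eq_norm_sq, sum_inner]
    simp only [inner_sum]
  simp only [norm_sub_sq_real, sum_add_distrib, sum_sub_distrib, sum_const, card_univ,
    nsmul_eq_mul, ← mul_sum, hinner]
  ring

lemma sum_sum_norm_sub_sq_le_of_norm_eq_one {ι E : Type*} [Fintype ι] [NormedAddCommGroup E]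
    [InnerProductSpace ℝ E] {x : ι → E} (hx : ∀ i, ‖x i‖ = 1) :
    ∑ i, ∑ j, ‖x i - x j‖ ^ 2 ≤ 2 * (Fintype.card ι : ℝ) ^ 2 := by
  rw [sum_sum_norm_sub_sq]
  simp only [hx, one_pow, sum_const, card_univ, nsmul_eq_mul, mul_one]
  nlinarith [sq_nonneg ‖∑ i, x i‖]

lemma ConvexOn.map_le_inv_card_mul_sum_of_antitone {ι : Type*} [Fintype ι] [Nonempty ι]
    {h : ℝ → ℝ} (hconv : ConvexOn ℝ Set.univ h) (hdec : Antitone h) {f : ι → ℝ} {c : ℝ}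
    (hf : (Fintype.card ι : ℝ)⁻¹ * ∑ i, f i ≤ c) :
    h c ≤ (Fintype.card ι : ℝ)⁻¹ * ∑ i, h (f i) := by
  have hcard : (Fintype.card ι : ℝ) ≠ 0 := by positivity
  have jensen := hconv.map_sum_le (t := univ) (w := fun _ => (Fintype.card ι : ℝ)⁻¹) (p := f)
    (fun _ _ => by positivity) (by simp [card_univ, hcard]) (fun _ _ => Set.mem_univ _)
  simp only [smul_eq_mul, ← mul_sum] at jensen
  exact (hdec hf).trans jensen

/-- For unit vectors x₁,…,x_N in ℝ^d and h : ℝ → ℝ convex and decreasing,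
(1/N²)·Σ_{i,j} h(‖xᵢ - xⱼ‖²) ≥ h(2) (sum over all ordered pairs). -/
theorem stmt_11 {N d : ℕ} (hN : 0 < N) (x : Fin N → EuclideanSpace ℝ (Fin d))
    (hx : ∀ i, ‖x i‖ = 1) (h : ℝ → ℝ)
    (hconv : ConvexOn ℝ Set.univ h) (hdec : Antitone h) :
    h 2 ≤ (1 / (N : ℝ) ^ 2) * ∑ i, ∑ j, h (‖x i - x j‖ ^ 2) := by
  have : Nonempty (Fin N × Fin N) := ⟨(⟨0, hN⟩, ⟨0, hN⟩)⟩
  have hcard : (Fintype.card (Fin N × Fin N) : ℝ)⁻¹ = 1 / (N : ℝ) ^ 2 := by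
    simp [sq]
  have hmean : (Fintype.card (Fin N × Fin N) : ℝ)⁻¹ * ∑ p : Fin N × Fin N, ‖x p.1 - x p.2‖ ^ 2
      ≤ 2 := by
    rw [hcard, Fintype.sum_prod_type, one_div, inv_mul_le_iff₀ (by positivity)]
    simpa [mul_comm] using sum_sum_norm_sub_sq_le_of_norm_eq_one hx
  simpa only [hcard, Fintype.sum_prod_type] using
    hconv.map_le_inv_card_mul_sum_of_antitone hdec hmean
end

section
/- Let f: ℝ₊ → ℝ be convex and differentiable with f* its convex conjugate. For fixed densities p, q and any measurable function s, the functional E_p[s] - E_q[f*∘s] is bounded above by the f-divergence D_f(p‖q) = E_q[f(p/q)], with equality when s = f'(p/q) q-almost surely. -/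
open MeasureTheory

/-- Tangent line inequality: for convex differentiable `f` on `(0,∞)`,
`y * f' x - f y ≤ x * f' x - f x`. -/
lemma tangent_aux {f f' : ℝ → ℝ} (hconv : ConvexOn ℝ (Set.Ioi 0) f)
    (hderiv : ∀ x, 0 < x → HasDerivAt f (f' x) x)
    {x y : ℝ} (hx : 0 < x) (hy : 0 < y) :
    y * f' x - f y ≤ x * f' x - f x := by
  rcases lt_trichotomy y x with h | h | h
  · have := hconv.slope_le_of_hasDerivAt hy hx h (hderiv x hx)
    rw [slope_def_field, div_le_iff₀ (by linarith)] at this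
    nlinarith
  · simp [h]
  · have := hconv.le_slope_of_hasDerivAt hx hy h (hderiv x hx)
    rw [slope_def_field, le_div_iff₀ (by linarith)] at this
    nlinarith

/-- The conjugate evaluated at the derivative: `fstar (f' x) = x * f' x - f x`. -/
lemma fstar_deriv_aux {f f' fstar : ℝ → ℝ} (hconv : ConvexOn ℝ (Set.Ioi 0) f)
    (hderiv : ∀ x, 0 < x → HasDerivAt f (f' x) x)
    (hfstar : ∀ t, IsLUB {y : ℝ | ∃ x : ℝ, 0 < x ∧ y = x * t - f x} (fstar t))
    {x : ℝ} (hx : 0 < x) : fstar (f' x) = x * f' x - f x := by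
  refine (hfstar (f' x)).unique (IsGreatest.isLUB ⟨⟨x, hx, rfl⟩, ?_⟩)
  rintro z ⟨y, hy, rfl⟩
  exact tangent_aux hconv hderiv hx hy

/-- For densities p, q w.r.t. a dominating measure μ and convex differentiable f
with conjugate f*, the functional E_p[s] - E_q[f*∘s] is bounded above by the
f-divergence ∫ f(p/q) dQ, with equality when s = f'(p/q). -/
theorem stmt_18 {Ω : Type*} [MeasurableSpace Ω] (μ : Measure Ω)
    (p q : Ω → ℝ) (hp : ∀ ω, 0 < p ω) (hq : ∀ ω, 0 < q ω)
    (f f' fstar : ℝ → ℝ) (hconv : ConvexOn ℝ (Set.Ioi 0) f)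
    (hderiv : ∀ x, 0 < x → HasDerivAt f (f' x) x)
    (hfstar : ∀ t, IsLUB {y : ℝ | ∃ x : ℝ, 0 < x ∧ y = x * t - f x} (fstar t))
    (s : Ω → ℝ)
    (h1 : Integrable (fun ω => s ω * p ω) μ)
    (h2 : Integrable (fun ω => fstar (s ω) * q ω) μ)
    (h3 : Integrable (fun ω => f (p ω / q ω) * q ω) μ)
    (h4 : Integrable (fun ω => f' (p ω / q ω) * p ω) μ)
    (h5 : Integrable (fun ω => fstar (f' (p ω / q ω)) * q ω) μ) :
    (∫ ω, s ω * p ω ∂μ) - (∫ ω, fstar (s ω) * q ω ∂μ)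
      ≤ ∫ ω, f (p ω / q ω) * q ω ∂μ ∧
    (∫ ω, f' (p ω / q ω) * p ω ∂μ) - (∫ ω, fstar (f' (p ω / q ω)) * q ω ∂μ)
      = ∫ ω, f (p ω / q ω) * q ω ∂μ := by
  have hpq : ∀ ω, 0 < p ω / q ω := fun ω => div_pos (hp ω) (hq ω)
  constructor
  · rw [← integral_sub h1 h2]
    refine integral_mono (h1.sub h2) h3 fun ω => ?_
    have hub : (p ω / q ω) * s ω - f (p ω / q ω) ≤ fstar (s ω) :=
      (hfstar (s ω)).1 ⟨p ω / q ω, hpq ω, rfl⟩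
    have hq' := (hq ω).le
    have : (p ω / q ω) * q ω = p ω := div_mul_cancel₀ _ (hq ω).ne'
    have key : p ω / q ω * s ω * q ω = s ω * p ω := by
      rw [mul_comm _ (s ω), mul_assoc, this]
    simp only
    nlinarith [mul_le_mul_of_nonneg_right hub hq', sub_mul (p ω / q ω * s ω) (f (p ω / q ω)) (q ω)]
  · rw [← integral_sub h4 h5]
    refine integral_congr_ae (Filter.Eventually.of_forall fun ω => ?_)
    have h := fstar_deriv_aux hconv hderiv hfstar (hpq ω)
    have hmul : (p ω / q ω) * q ω = p ω := div_mul_cancel₀ _ (hq ω).ne'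
    have key : p ω / q ω * f' (p ω / q ω) * q ω = f' (p ω / q ω) * p ω := by
      rw [mul_comm _ (f' _), mul_assoc, hmul]
    simp only [h]
    linarith [key, sub_mul (p ω / q ω * f' (p ω / q ω)) (f (p ω / q ω)) (q ω)]
end
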